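/- Let X be a closed topological manifold of dimension n and let L : E → F be a bundle morphism between real vector bundles of the same fibre dimension over X, where E is orientable and F is non-orientable (or vice versa). Then the covering dimension of Σ(L) is at least n − 1. -/

import Mathlib

set_option autoImplicit false

noncomputable section

open Bundle Set Module

/-- `HasCovDimLE Y m` : every finite open cover of `Y` has a finite open refinement in which
no point is included in more than `m + 1` elements. -/
def HasCovDimLE (Y : Type) [TopologicalSpace Y] (m : ℕ) : Prop :=
  ∀ U : Finset (Set Y), (∀ u ∈ U, IsOpen u) → ⋃₀ (U : Set (Set Y)) = Set.univ →
    ∃ V : Finset (Set Y), (∀ v ∈ V, IsOpen v) ∧ ⋃₀ (V : Set (Set Y)) = Set.univ ∧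
      (∀ v ∈ V, ∃ u ∈ U, v ⊆ u) ∧
      ∀ y : Y, {v ∈ (V : Set (Set Y)) | y ∈ v}.ncard ≤ m + 1

/-- The covering dimension of a topological space, as an element of `ℕ∞` (`⊤` if no finite
`m` works). -/
def covDim (Y : Type) [TopologicalSpace Y] : ℕ∞ :=
  sInf {d : ℕ∞ | ∃ m : ℕ, d = (m : ℕ∞) ∧ HasCovDimLE Y m}

/-- The underlying graded groups of: relative singular homology `H_k(Y, A; R)` (with
`H_k(Y; R) = H_k(Y, ∅; R)`), singular cohomology `H^k(Y; G)`, Čech cohomology `Ȟ^k(Y; R)`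
and the `Ext`-term `Ext¹_R(H_{k-1}(Y; R), G)` of the universal coefficient theorem. -/
structure CohomologyData (R : Type) [CommRing R] (G : Type) [AddCommGroup G] [Module R G] where
  /-- relative singular homology `H_k(Y, A; R)` -/
  Hrel : ∀ (Y : Type) [TopologicalSpace Y], Set Y → ℤ → Type
  instHrelAdd : ∀ (Y : Type) [TopologicalSpace Y] (A : Set Y) (k : ℤ), AddCommGroup (Hrel Y A k)
  instHrelMod : ∀ (Y : Type) [TopologicalSpace Y] (A : Set Y) (k : ℤ), Module R (Hrel Y A k)
  /-- singular cohomology `H^k(Y; G)` -/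
  Hco : ∀ (Y : Type) [TopologicalSpace Y], ℤ → Type
  instHcoAdd : ∀ (Y : Type) [TopologicalSpace Y] (k : ℤ), AddCommGroup (Hco Y k)
  /-- Čech cohomology `Ȟ^k(Y; R)` -/
  Hcech : ∀ (Y : Type) [TopologicalSpace Y], ℤ → Type
  instHcechAdd : ∀ (Y : Type) [TopologicalSpace Y] (k : ℤ), AddCommGroup (Hcech Y k)
  /-- the group `Ext¹_R(H_{k-1}(Y; R), G)` appearing in the universal coefficient theorem -/
  ExtUCT : ∀ (Y : Type) [TopologicalSpace Y], ℤ → Type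
  instExtAdd : ∀ (Y : Type) [TopologicalSpace Y] (k : ℤ), AddCommGroup (ExtUCT Y k)

attribute [instance] CohomologyData.instHrelAdd CohomologyData.instHrelMod
  CohomologyData.instHcoAdd CohomologyData.instHcechAdd CohomologyData.instExtAdd

/-- An axiomatization of the package consisting of singular homology of pairs (with
coefficients in a PID `R`), singular cohomology (with coefficients in an `R`-module `G`) and
Čech cohomology (with coefficients in `R`), together with: functoriality, the Kronecker
pairing `α` (written `pair`, `α^k(η)(ξ) = ⟨η, ξ⟩`) and its naturality, the universal
coefficient exact sequence
`0 → Ext¹_R(H_{k-1}(Y;R), G) →^{β^k} H^k(Y;G) →^{α^k} Hom_R(H_k(Y;R), G) → 0`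
(exactness at `H^k` and vanishing of the `Ext`-term on free homology), the homology long
exact sequence of a pair (the part `im j_* = ker π_*`), and the fact that non-vanishing of
`Ȟ^m` of a compact Hausdorff space forces its covering dimension to be at least `m`.
All of these are classical facts about the (co)homology of topological spaces; they are the
only properties used in the paper. -/
structure Theory (R : Type) [CommRing R] [IsDomain R] [IsPrincipalIdealRing R]
    (G : Type) [AddCommGroup G] [Module R G] extends CohomologyData R G where
  /-- functoriality of relative homology for maps of pairs -/
  hmap : ∀ {Y Z : Type} [TopologicalSpace Y] [TopologicalSpace Z]
    (f : C(Y, Z)) {A : Set Y} {B : Set Z}, Set.MapsTo f A B →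
    ∀ k : ℤ, Hrel Y A k →ₗ[R] Hrel Z B k
  /-- contravariant functoriality of singular cohomology -/
  cmap : ∀ {Y Z : Type} [TopologicalSpace Y] [TopologicalSpace Z]
    (f : C(Y, Z)) (k : ℤ), Hco Z k →+ Hco Y k
  cmap_id : ∀ (Y : Type) [TopologicalSpace Y] (k : ℤ) (x : Hco Y k),
    cmap (ContinuousMap.id Y) k x = x
  /-- contravariant functoriality of Čech cohomology -/
  ccmap : ∀ {Y Z : Type} [TopologicalSpace Y] [TopologicalSpace Z]
    (f : C(Y, Z)) (k : ℤ), Hcech Z k →+ Hcech Y k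
  /-- the Kronecker pairing `α^k : H^k(Y;G) → Hom_R(H_k(Y;R), G)`, `α^k(η)(ξ) = ⟨η, ξ⟩` -/
  pair : ∀ (Y : Type) [TopologicalSpace Y] (k : ℤ),
    Hco Y k →+ (Hrel Y (∅ : Set Y) k →ₗ[R] G)
  /-- naturality of the Kronecker pairing: `⟨f^*η, ξ⟩ = ⟨η, f_*ξ⟩` -/
  pair_natural : ∀ {Y Z : Type} [TopologicalSpace Y] [TopologicalSpace Z] (f : C(Y, Z)) (k : ℤ)
    (η : Hco Z k) (ξ : Hrel Y (∅ : Set Y) k),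
    pair Y k (cmap f k η) ξ = pair Z k η (hmap f (Set.mapsTo_empty _ _) k ξ)
  /-- the map `β^k : Ext¹_R(H_{k-1}(Y;R), G) → H^k(Y;G)` of the universal coefficient
  theorem -/
  betaMap : ∀ (Y : Type) [TopologicalSpace Y] (k : ℤ), ExtUCT Y k →+ Hco Y k
  /-- exactness of the universal coefficient sequence at `H^k(Y;G)`: `ker α^k = im β^k` -/
  uct_exact : ∀ (Y : Type) [TopologicalSpace Y] (k : ℤ) (x : Hco Y k),
    pair Y k x = 0 ↔ x ∈ Set.range (betaMap Y k)
  /-- `Ext¹_R(H_{k-1}(Y;R), G)` vanishes if `H_{k-1}(Y;R)` is a free `R`-module -/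
  uct_free : ∀ (Y : Type) [TopologicalSpace Y] (k : ℤ),
    Module.Free R (Hrel Y (∅ : Set Y) (k - 1)) → ∀ z : ExtUCT Y k, betaMap Y k z = 0
  /-- exactness of the long exact homology sequence of the pair `(X, X ∖ A)` at `H_k(X)`:
  `π_* ξ = 0` iff `ξ` comes from `H_k(X ∖ A)` -/
  les_exact : ∀ (X : Type) [TopologicalSpace X] (A : Set X) (k : ℤ)
    (ξ : Hrel X (∅ : Set X) k),
    hmap (ContinuousMap.id X) (Set.mapsTo_empty _ _) k ξ = (0 : Hrel X Aᶜ k) ↔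
      ∃ ζ : Hrel (↥(Aᶜ)) (∅ : Set ↥(Aᶜ)) k,
        hmap (⟨Subtype.val, continuous_subtype_val⟩ : C(↥(Aᶜ), X))
          (Set.mapsTo_empty _ _) k ζ = ξ
  /-- if the Čech cohomology `Ȟ^m(Y;R)` of a compact Hausdorff space is non-trivial
  then its covering dimension is at least `m` -/
  dim_cech : ∀ (Y : Type) [TopologicalSpace Y] [CompactSpace Y] [T2Space Y] (m : ℕ),
    (∃ x : Hcech Y (m : ℤ), x ≠ 0) → (m : ℕ∞) ≤ covDim Y

/-- `X` is `R`-orientable (with respect to the homology theory `T`) if there is a compatible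
continuous choice `o(λ)` of generators of the local homology modules
`H_n(X, X ∖ {λ}; R) ≅ R`: i.e. an open cover `{U_i}` of `X` and classes
`μ_i ∈ H_n(X, X ∖ U_i; R)` restricting to `o(λ)` for every `λ ∈ U_i`. -/
def ROrientable {R : Type} [CommRing R] [IsDomain R] [IsPrincipalIdealRing R]
    {G : Type} [AddCommGroup G] [Module R G] (T : Theory R G)
    (n : ℕ) (X : Type) [TopologicalSpace X] : Prop :=
  ∃ o : ∀ x : X, T.Hrel X ({x}ᶜ) (n : ℤ),
    (∀ x, Submodule.span R {o x} = ⊤) ∧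
    ∃ (ι : Type) (U : ι → Set X), (∀ i, IsOpen (U i)) ∧ (∀ x, ∃ i, x ∈ U i) ∧
      ∃ μ : ∀ i, T.Hrel X ((U i)ᶜ) (n : ℤ),
        ∀ (i) (x) (hx : x ∈ U i),
          T.hmap (ContinuousMap.id X)
            ((Set.mapsTo_id _).mono_right
              (Set.compl_subset_compl.mpr (Set.singleton_subset_iff.mpr hx)))
            (n : ℤ) (μ i) = o x

/-- The full package: the (co)homology theories together with Poincaré–Lefschetz duality for
closed `R`-orientable topological `n`-manifolds (in the form of [Bredon, Cor. VI.8.4]: for a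
closed subset `A ⊆ X` there is a commutative square consisting of the duality isomorphisms
`Ȟ^{n-k}(X;R) ≅ H_k(X;R)` and `Ȟ^{n-k}(A;R) ≅ H_k(X, X∖A;R)`, the restriction
`i^* : Ȟ^{n-k}(X;R) → Ȟ^{n-k}(A;R)` and `π_* : H_k(X;R) → H_k(X, X∖A;R)`), and the fact
that every closed topological manifold is `R`-orientable when `2 = 0` in `R`. -/
structure GoodTheory (R : Type) [CommRing R] [IsDomain R] [IsPrincipalIdealRing R]
    (G : Type) [AddCommGroup G] [Module R G] extends Theory R G where
  /-- Poincaré–Lefschetz duality -/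
  pd : ∀ (n : ℕ) (X : Type) [TopologicalSpace X] [T2Space X]
    [ChartedSpace (EuclideanSpace ℝ (Fin n)) X] [CompactSpace X],
    ROrientable toTheory n X →
    ∀ (k : ℤ) (A : Set X), IsClosed A →
      ∃ (pdX : Hcech X ((n : ℤ) - k) ≃+ Hrel X (∅ : Set X) k)
        (pdA : Hcech (↥A) ((n : ℤ) - k) ≃+ Hrel X Aᶜ k),
        ∀ η : Hcech X ((n : ℤ) - k),
          pdA (ccmap (⟨Subtype.val, continuous_subtype_val⟩ : C(↥A, X)) ((n : ℤ) - k) η) =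
          hmap (ContinuousMap.id X) (Set.mapsTo_empty _ _) k (pdX η)
  /-- every closed topological manifold is `R`-orientable if `2 = 0` in `R` -/
  orient_two : (2 : R) = 0 → ∀ (n : ℕ) (X : Type) [TopologicalSpace X] [T2Space X]
    [ChartedSpace (EuclideanSpace ℝ (Fin n)) X] [CompactSpace X],
    ROrientable toTheory n X

/-- A (finite rank) vector bundle over the base `Y` with scalar field `𝕜`, packaged as a
structure: a model fibre `F` and a family of fibres `E y` together with all the data making
it a topological vector bundle. -/
structure VB (𝕜 : Type) [NontriviallyNormedField 𝕜] (Y : Type) [TopologicalSpace Y] :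
    Type 1 where
  /-- the model fibre -/
  F : Type
  [nF : NormedAddCommGroup F]
  [sF : NormedSpace 𝕜 F]
  [fdF : FiniteDimensional 𝕜 F]
  /-- the fibres -/
  E : Y → Type
  [aE : ∀ y, AddCommGroup (E y)]
  [mE : ∀ y, Module 𝕜 (E y)]
  [tE : ∀ y, TopologicalSpace (E y)]
  [tT : TopologicalSpace (Bundle.TotalSpace F E)]
  [fb : FiberBundle F E]
  [vb : VectorBundle 𝕜 F E]

attribute [instance] VB.nF VB.sF VB.fdF VB.aE VB.mE VB.tE VB.tT VB.fb VB.vb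

/-- A morphism of vector bundles over `X`: a fibrewise (continuous) linear map which is
continuous as a map of total spaces. -/
def IsBundleMorphism {𝕜 : Type} [NontriviallyNormedField 𝕜] {X : Type} [TopologicalSpace X]
    (V W : VB 𝕜 X) (L : ∀ x, V.E x →L[𝕜] W.E x) : Prop :=
  Continuous fun p : Bundle.TotalSpace V.F V.E =>
    (Bundle.TotalSpace.mk p.1 (L p.1 p.2) : Bundle.TotalSpace W.F W.E)

/-- The singular set `Σ(L) = {λ ∈ X | L_λ ∉ GL(E_λ, F_λ)}` of a bundle morphism `L`:
the set of points of the base over which `L` is not a linear isomorphism of fibres. -/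
def singularSet {𝕜 : Type} [NontriviallyNormedField 𝕜] {X : Type} [TopologicalSpace X]
    (V W : VB 𝕜 X) (L : ∀ x, V.E x →L[𝕜] W.E x) : Set X :=
  {x : X | ¬ Function.Bijective (L x)}

/-- An `H^k(·;G)`-valued characteristic class `c`: it assigns to every vector bundle over a
base `Y` a class `c(E) ∈ H^k(Y;G)`, such that `c(E₁) = f^* c(E₂)` whenever a continuous map
`f : Y → Z` is covered by a (fibrewise isomorphic, continuous) bundle map `E₁ → E₂`. -/
structure CharClass {R : Type} [CommRing R] [IsDomain R] [IsPrincipalIdealRing R]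
    {G : Type} [AddCommGroup G] [Module R G] (T : GoodTheory R G)
    (𝕜 : Type) [NontriviallyNormedField 𝕜] (k : ℤ) where
  /-- the value of the characteristic class on a bundle -/
  cls : ∀ (Y : Type) [TopologicalSpace Y], VB 𝕜 Y → T.Hco Y k
  /-- naturality with respect to bundle maps covering continuous maps -/
  natural : ∀ (Y Z : Type) [TopologicalSpace Y] [TopologicalSpace Z]
    (V : VB 𝕜 Y) (W : VB 𝕜 Z) (f : C(Y, Z)) (φ : ∀ y, V.E y ≃ₗ[𝕜] W.E (f y)),
    Continuous (fun p : Bundle.TotalSpace V.F V.E =>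
      (Bundle.TotalSpace.mk (f p.1) (φ p.1 p.2) : Bundle.TotalSpace W.F W.E)) →
    cls Y V = T.cmap f k (cls Z W)

/-- `o` is an orientation of the real vector bundle `V` of rank `r`: a function assigning an
orientation to each fibre in such a way that near each point of the base the local
trivialization carries the orientations of the fibres into one fixed orientation of the
model fibre. -/
def IsBundleOrientation {Y : Type} [TopologicalSpace Y] (r : ℕ) (V : VB ℝ Y)
    (o : ∀ y, Orientation ℝ (V.E y) (Fin r)) : Prop :=
  ∀ y₀ : Y, ∃ ω : Orientation ℝ V.F (Fin r),
    ∀ (y) (hy : y ∈ (trivializationAt V.F V.E y₀).baseSet),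
      Orientation.map (Fin r)
        ((trivializationAt V.F V.E y₀).continuousLinearEquivAt ℝ y hy).toLinearEquiv
        (o y) = ω

/-- A real vector bundle is orientable if it admits an orientation. -/
def BundleOrientable {Y : Type} [TopologicalSpace Y] (V : VB ℝ Y) : Prop :=
  ∃ o : ∀ y, Orientation ℝ (V.E y) (Fin (Module.finrank ℝ V.F)),
    IsBundleOrientation (Module.finrank ℝ V.F) V o

/-!
Over the complement of `Σ = Σ(L)` the morphism `L` is a bundle isomorphism, so `w₁(F)` and
`w₁(E) = 0` agree there: `w₁(F)` restricts to zero on `X ∖ Σ`. With `ℤ₂` coefficients the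
Kronecker pairing is injective, so some `ξ ∈ H₁(X)` pairs non-trivially with `w₁(F)`; by
naturality of the pairing `ξ` does not come from `H₁(X ∖ Σ)`, hence its image in `H₁(X, X ∖ Σ)`
is non-zero (`Σ` is closed, invertibility being an open condition in local trivializations).
Every closed manifold is `ℤ₂`-orientable, and Poincaré–Lefschetz duality identifies
`H₁(X, X ∖ Σ)` with `Ȟ^{n-1}(Σ)` compatibly with `Ȟ^{n-1}(X) ≅ H₁(X)`, so `Ȟ^{n-1}(Σ) ≠ 0` and
`dim Σ ≥ n - 1`.
-/

theorem ContinuousLinearMap.isOpen_setOf_bijective {𝕜 E F : Type*} [NontriviallyNormedField 𝕜]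
    [NormedAddCommGroup E] [NormedSpace 𝕜 E] [CompleteSpace E]
    [NormedAddCommGroup F] [NormedSpace 𝕜 F] [CompleteSpace F] :
    IsOpen {f : E →L[𝕜] F | Function.Bijective f} := by
  convert ContinuousLinearEquiv.isOpen (𝕜 := 𝕜) (E := E) (F := F)
  ext f
  refine ⟨fun hf => ?_, ?_⟩
  · exact ⟨.ofBijective f (LinearMap.ker_eq_bot.2 hf.1) (LinearMap.range_eq_top.2 hf.2),
      ContinuousLinearEquiv.coe_ofBijective _ _ _⟩
  · rintro ⟨e, rfl⟩
    exact e.bijective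

section

variable {𝕜 : Type} [NontriviallyNormedField 𝕜] {X Y : Type} [TopologicalSpace X]
  [TopologicalSpace Y]

theorem VB.bijective_inCoordinates_iff (V W : VB 𝕜 X) {x₀ x : X}
    (hV : x ∈ (trivializationAt V.F V.E x₀).baseSet)
    (hW : x ∈ (trivializationAt W.F W.E x₀).baseSet) (ϕ : V.E x →L[𝕜] W.E x) :
    Function.Bijective (ContinuousLinearMap.inCoordinates V.F V.E W.F W.E x₀ x x₀ x ϕ) ↔
      Function.Bijective ϕ := by
  rw [ContinuousLinearMap.inCoordinates_eq hV hW, ContinuousLinearMap.coe_comp,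
    ContinuousLinearMap.coe_comp, ContinuousLinearEquiv.coe_coe, ContinuousLinearEquiv.coe_coe,
    EquivLike.comp_bijective, EquivLike.bijective_comp]

theorem IsBundleMorphism.continuousOn_inCoordinates [CompleteSpace 𝕜] {V W : VB 𝕜 X}
    {L : ∀ x, V.E x →L[𝕜] W.E x} (hL : IsBundleMorphism V W L) (x₀ : X) :
    ContinuousOn (fun x => ContinuousLinearMap.inCoordinates V.F V.E W.F W.E x₀ x x₀ x (L x))
      ((trivializationAt V.F V.E x₀).baseSet ∩ (trivializationAt W.F W.E x₀).baseSet) := by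
  set e := trivializationAt V.F V.E x₀
  set e' := trivializationAt W.F W.E x₀
  refine continuousOn_clm_apply.2 fun v => ?_
  have hsection : ContinuousOn (fun x => (⟨x, e.symm x v⟩ : TotalSpace V.F V.E))
      (e.baseSet ∩ e'.baseSet) :=
    e.continuousOn_symm.comp (continuous_id.prodMk continuous_const).continuousOn
      fun x hx => ⟨hx.1, mem_univ _⟩
  refine ((e'.continuousOn.comp (hL.comp_continuousOn hsection)
    fun x hx => e'.mem_source.2 hx.2).snd).congr fun x hx => ?_
  rw [ContinuousLinearMap.inCoordinates, ContinuousLinearMap.comp_apply,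
    ContinuousLinearMap.comp_apply, e.symmL_apply hx.1,
    e'.continuousLinearMapAt_apply_of_mem 𝕜 hx.2]
  rfl

theorem isClosed_singularSet [CompleteSpace 𝕜] (V W : VB 𝕜 X) (L : ∀ x, V.E x →L[𝕜] W.E x)
    (hL : IsBundleMorphism V W L) :
    IsClosed (singularSet V W L) := by
  have := FiniteDimensional.complete 𝕜 V.F
  have := FiniteDimensional.complete 𝕜 W.F
  rw [← isOpen_compl_iff, isOpen_iff_forall_mem_open]
  intro x₀ hx₀
  set s := (trivializationAt V.F V.E x₀).baseSet ∩ (trivializationAt W.F W.E x₀).baseSet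
  have hbij : ∀ x ∈ s, Function.Bijective
      (ContinuousLinearMap.inCoordinates V.F V.E W.F W.E x₀ x x₀ x (L x)) ↔
        Function.Bijective (L x) :=
    fun x hx => VB.bijective_inCoordinates_iff V W hx.1 hx.2 (L x)
  have hx₀s : x₀ ∈ s :=
    ⟨mem_baseSet_trivializationAt V.F V.E x₀, mem_baseSet_trivializationAt W.F W.E x₀⟩
  refine ⟨s ∩ _ ⁻¹' {f | Function.Bijective f}, fun x hx => not_not.2 ((hbij x hx.1).1 hx.2),
    (hL.continuousOn_inCoordinates x₀).isOpen_inter_preimage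
      ((trivializationAt V.F V.E x₀).open_baseSet.inter (trivializationAt W.F W.E x₀).open_baseSet)
      ContinuousLinearMap.isOpen_setOf_bijective,
    hx₀s, (hbij x₀ hx₀s).2 (not_not.1 hx₀)⟩

def VB.pullback (V : VB 𝕜 X) (f : C(Y, X)) : VB 𝕜 Y where
  F := V.F
  E := (f : Y → X) *ᵖ V.E
  aE := fun y => inferInstanceAs (AddCommGroup (V.E (f y)))
  mE := fun y => inferInstanceAs (Module 𝕜 (V.E (f y)))
  tE := inferInstance
  tT := inferInstance
  fb := FiberBundle.pullback f
  vb := inferInstanceAs (VectorBundle 𝕜 V.F ((f : Y → X) *ᵖ V.E))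

theorem IsBundleMorphism.pullback {V W : VB 𝕜 X} {L : ∀ x, V.E x →L[𝕜] W.E x}
    (hL : IsBundleMorphism V W L) (f : C(Y, X)) :
    IsBundleMorphism (V.pullback f) (W.pullback f) fun y => L (f y) :=
  (inducing_pullbackTotalSpaceEmbedding W.F W.E f).continuous_iff.2 <|
    (Pullback.continuous_proj V.F V.E f).prodMk (hL.comp (Pullback.continuous_lift V.F V.E f))

end

theorem Theory.exists_pair_ne_zero {R : Type} [Field R] {G : Type} [AddCommGroup G]
    [Module R G] (T : Theory R G) {Y : Type} [TopologicalSpace Y] {k : ℤ} {c : T.Hco Y k}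
    (hc : c ≠ 0) : ∃ ξ, T.pair Y k c ξ ≠ 0 := by
  by_contra! h
  obtain ⟨z, rfl⟩ := (T.uct_exact Y k c).1 (LinearMap.ext h)
  exact hc (T.uct_free Y k inferInstance z)

section

variable {R : Type} [CommRing R] [IsDomain R] [IsPrincipalIdealRing R]
  {G : Type} [AddCommGroup G] [Module R G]

theorem Theory.hmap_ne_zero_of_pair_ne_zero (T : Theory R G) {X : Type} [TopologicalSpace X]
    {A : Set X} {k : ℤ} {c : T.Hco X k}
    (hc : T.cmap (⟨Subtype.val, continuous_subtype_val⟩ : C(↥(Aᶜ), X)) k c = 0)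
    {ξ : T.Hrel X ∅ k} (hξ : T.pair X k c ξ ≠ 0) :
    T.hmap (ContinuousMap.id X) (Set.mapsTo_empty _ _) k ξ ≠ (0 : T.Hrel X Aᶜ k) := by
  intro h
  obtain ⟨ζ, rfl⟩ := (T.les_exact X A k ξ).1 h
  rw [← T.pair_natural, hc, map_zero, LinearMap.zero_apply] at hξ
  exact hξ rfl

theorem GoodTheory.le_covDim_of_hmap_ne_zero (T : GoodTheory R G)
    (n : ℕ) (X : Type) [TopologicalSpace X] [T2Space X]
    [ChartedSpace (EuclideanSpace ℝ (Fin n)) X] [CompactSpace X] (hX : ROrientable T.toTheory n X)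
    {A : Set X} (hA : IsClosed A) (k : ℕ) {ξ : T.Hrel X ∅ k}
    (hξ : T.hmap (ContinuousMap.id X) (Set.mapsTo_empty _ _) k ξ ≠ (0 : T.Hrel X Aᶜ k)) :
    ((n - k : ℕ) : ℕ∞) ≤ covDim A := by
  obtain ⟨pdX, pdA, hpd⟩ := T.pd n X hX k A hA
  have hcech : ∃ η : T.Hcech A ((n : ℤ) - k), η ≠ 0 := by
    refine ⟨T.ccmap ⟨Subtype.val, continuous_subtype_val⟩ _ (pdX.symm ξ), fun h => hξ ?_⟩
    rw [← pdX.apply_symm_apply ξ, ← hpd, h, map_zero]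
  rcases le_or_gt k n with hkn | hnk
  · rw [← Nat.cast_sub hkn] at hcech
    have := isCompact_iff_compactSpace.1 hA.isCompact
    exact T.dim_cech A (n - k) hcech
  · simp [Nat.sub_eq_zero_of_le hnk.le]

namespace CharClass

variable {T : GoodTheory R G} {𝕜 : Type} [NontriviallyNormedField 𝕜] {k : ℤ}
  (w : CharClass T 𝕜 k) {Y Z : Type} [TopologicalSpace Y] [TopologicalSpace Z]

theorem cls_pullback (V : VB 𝕜 Z) (f : C(Y, Z)) :
    w.cls Y (V.pullback f) = T.cmap f k (w.cls Z V) :=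
  w.natural Y Z (V.pullback f) V f (fun _ => LinearEquiv.refl 𝕜 _)
    (Pullback.continuous_lift V.F V.E f)

theorem cmap_cls_eq_of_bijective {V W : VB 𝕜 Z} {L : ∀ z, V.E z →L[𝕜] W.E z}
    (hL : IsBundleMorphism V W L) (f : C(Y, Z)) (hbij : ∀ y, Function.Bijective (L (f y))) :
    T.cmap f k (w.cls Z V) = T.cmap f k (w.cls Z W) := by
  have hiso := w.natural Y Y (V.pullback f) (W.pullback f) (ContinuousMap.id Y)
    (fun y => LinearEquiv.ofBijective (L (f y) : V.E (f y) →ₗ[𝕜] W.E (f y)) (hbij y))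
    (hL.pullback f)
  rw [T.cmap_id] at hiso
  rw [← w.cls_pullback, ← w.cls_pullback, hiso]

end CharClass

end

theorem covDim_ge_of_orientable_nonorientable_general
    (T : GoodTheory (ZMod 2) (ZMod 2))
    (n : ℕ) (X : Type) [TopologicalSpace X] [T2Space X]
    [ChartedSpace (EuclideanSpace ℝ (Fin n)) X] [CompactSpace X]
    (V W : VB ℝ X)
    (L : ∀ x, V.E x →L[ℝ] W.E x) (hL : IsBundleMorphism V W L)
    (w : CharClass T ℝ (1 : ℤ))
    (hwV : w.cls X V = 0 ↔ BundleOrientable V)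
    (hwW : w.cls X W = 0 ↔ BundleOrientable W)
    (hV : BundleOrientable V) (hW : ¬ BundleOrientable W) :
    ((n - 1 : ℕ) : ℕ∞) ≤ covDim ↥(singularSet V W L) := by
  have hres : T.cmap (⟨Subtype.val, continuous_subtype_val⟩ :
      C(↥((singularSet V W L)ᶜ), X)) 1 (w.cls X W) = 0 := by
    rw [← w.cmap_cls_eq_of_bijective hL _ fun y => not_not.1 y.2, hwV.2 hV, map_zero]
  obtain ⟨ξ, hξ⟩ := T.exists_pair_ne_zero (mt hwW.1 hW)
  exact T.le_covDim_of_hmap_ne_zero n X (T.orient_two (by decide) n X)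
    (isClosed_singularSet V W L hL) 1 (T.hmap_ne_zero_of_pair_ne_zero hres hξ)

/-- Let `X` be a closed topological manifold of dimension `n` and let
`L : E → F` be a bundle morphism between real vector bundles of the same fibre dimension
over `X`, where `E` is orientable and `F` is non-orientable. Then the covering dimension of
`Σ(L)` is at least `n - 1`.
(A real vector bundle is orientable if and only if its first Stiefel–Whitney class
`w₁ ∈ H¹(X;ℤ₂)` is trivial; the first Stiefel–Whitney class is represented by an
`H¹(·;ℤ₂)`-valued characteristic class `w` together with this characterization for the two
bundles at hand.) -/
theorem covDim_ge_of_orientable_nonorientable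
    (T : GoodTheory (ZMod 2) (ZMod 2))
    (n : ℕ) (X : Type) [TopologicalSpace X] [T2Space X]
    [ChartedSpace (EuclideanSpace ℝ (Fin n)) X] [CompactSpace X]
    (V W : VB ℝ X) (hrank : Module.finrank ℝ V.F = Module.finrank ℝ W.F)
    (L : ∀ x, V.E x →L[ℝ] W.E x) (hL : IsBundleMorphism V W L)
    (w : CharClass T ℝ (1 : ℤ))
    (hwV : w.cls X V = 0 ↔ BundleOrientable V)
    (hwW : w.cls X W = 0 ↔ BundleOrientable W)
    (hV : BundleOrientable V) (hW : ¬ BundleOrientable W) :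
    ((n - 1 : ℕ) : ℕ∞) ≤ covDim ↥(singularSet V W L) :=
  covDim_ge_of_orientable_nonorientable_general T n X V W L hL w hwV hwW hV hW

end
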